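/- Let P and Q be strictly positive probability distributions on a finite set X of size k, and suppose P lies in the affine set E = {R ∈ Δ_k° : AR = α} containing the I-projection P* of Q onto E. Then D(P‖Q) = D(P*‖Q) + D(P‖P*). (Pythagorean identity for I-projections onto affine sets.) -/

import Mathlib

/-!
At the I-projection `P*` the derivative of `t ↦ D(P* + t (P - P*) ‖ Q)` vanishes, because the
line through `P*` and `P` stays in `E` for small `|t|` (the constraints are affine and positivity
is an open condition); this derivative is `∑ₓ (P x - P* x) log (P* x / Q x)`. On the other hand, `log (P/Q) = log (P/P*) + log (P*/Q)`
gives `D(P‖Q) = D(P*‖Q) + D(P‖P*) + ∑ₓ (P x - P* x) log (P* x / Q x)`.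
-/

open Real Finset Matrix

/-- Kullback–Leibler divergence on a finite set. -/
noncomputable def KL {k : ℕ} (P Q : Fin k → ℝ) : ℝ :=
  ∑ x, P x * Real.log (P x / Q x)

open Filter Topology

section KL

variable {k d : ℕ}

def linearFamily (A : Matrix (Fin d) (Fin k) ℝ) (α : Fin d → ℝ) : Set (Fin k → ℝ) :=
  {R | (∀ x, 0 < R x) ∧ (∑ x, R x = 1) ∧ A.mulVec R = α}

lemma mul_log_div_eq_add (p : ℝ) {q r : ℝ} (hq : q ≠ 0) (hr : r ≠ 0) :
    p * log (p / q) = p * log (p / r) + p * log (r / q) := by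
  rcases eq_or_ne p 0 with rfl | hp
  · simp
  · rw [← mul_add, ← log_mul (div_ne_zero hp hr) (div_ne_zero hr hq), div_mul_div_cancel₀ hr]

theorem KL_eq_KL_add_KL_add_sum (P R Q : Fin k → ℝ) (hR : ∀ x, R x ≠ 0) (hQ : ∀ x, Q x ≠ 0) :
    KL P Q = KL R Q + KL P R + ∑ x, (P x - R x) * log (R x / Q x) := by
  simp only [KL, sub_mul, sum_sub_distrib]
  rw [sum_congr rfl fun x _ => mul_log_div_eq_add (P x) (hQ x) (hR x), sum_add_distrib]
  ring

theorem hasDerivAt_KL_add_smul {P Q : Fin k → ℝ} (hP : ∀ x, P x ≠ 0) (hQ : ∀ x, Q x ≠ 0)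
    (v : Fin k → ℝ) :
    HasDerivAt (fun t : ℝ => KL (P + t • v) Q)
      (∑ x, v x * log (P x / Q x) + ∑ x, v x) 0 := by
  simp only [KL, Pi.add_apply, Pi.smul_apply, smul_eq_mul, ← sum_add_distrib]
  refine HasDerivAt.fun_sum fun x _ => ?_
  have hline : HasDerivAt (fun t : ℝ => P x + t * v x) (v x) 0 := by
    simpa using ((hasDerivAt_id (0 : ℝ)).mul_const (v x)).const_add (P x)
  have hlog := (hline.div_const (Q x)).log (by simpa using div_ne_zero (hP x) (hQ x))
  refine (hline.fun_mul hlog).congr_deriv ?_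
  simp only [zero_mul, add_zero]
  field_simp [hP x, hQ x]

namespace linearFamily

variable {A : Matrix (Fin d) (Fin k) ℝ} {α : Fin d → ℝ} {P R : Fin k → ℝ}

lemma sum_sub_eq_zero (hP : P ∈ linearFamily A α) (hR : R ∈ linearFamily A α) :
    ∑ x, (P x - R x) = 0 := by
  rw [sum_sub_distrib, hP.2.1, hR.2.1, sub_self]

lemma eventually_add_smul_sub_mem (hP : P ∈ linearFamily A α) (hR : R ∈ linearFamily A α) :
    ∀ᶠ t in 𝓝 (0 : ℝ), R + t • (P - R) ∈ linearFamily A α := by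
  have hpos : ∀ᶠ t in 𝓝 (0 : ℝ), ∀ x, 0 < R x + t * (P x - R x) :=
    eventually_all.2 fun x =>
      ContinuousAt.eventually_lt continuousAt_const (by fun_prop) (by simpa using hR.1 x)
  refine hpos.mono fun t ht => ⟨by simpa using ht, ?_, ?_⟩
  · simp only [Pi.add_apply, Pi.smul_apply, Pi.sub_apply, smul_eq_mul, sum_add_distrib, ← mul_sum,
      sum_sub_eq_zero hP hR, hR.2.1, mul_zero, add_zero]
  · rw [mulVec_add, mulVec_smul, mulVec_sub, hP.2.2, hR.2.2, sub_self, smul_zero, add_zero]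

theorem sum_sub_mul_log_div_eq_zero {Q Pstar : Fin k → ℝ} (hQ : ∀ x, Q x ≠ 0)
    (hPstar : Pstar ∈ linearFamily A α) (hmin : ∀ R ∈ linearFamily A α, KL Pstar Q ≤ KL R Q)
    (hP : P ∈ linearFamily A α) :
    ∑ x, (P x - Pstar x) * log (Pstar x / Q x) = 0 := by
  have hlocal : IsLocalMin (fun t : ℝ => KL (Pstar + t • (P - Pstar)) Q) 0 :=
    (eventually_add_smul_sub_mem hP hPstar).mono fun t ht => by simpa using hmin _ ht
  have hderiv := hlocal.hasDerivAt_eq_zero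
    (hasDerivAt_KL_add_smul (fun x => (hPstar.1 x).ne') hQ (P - Pstar))
  simpa only [Pi.sub_apply, sum_sub_eq_zero hP hPstar, add_zero] using hderiv

end linearFamily

end KL

theorem stmt_2_general {k d : ℕ}
    (Q : Fin k → ℝ) (hQpos : ∀ x, 0 < Q x)
    (A : Matrix (Fin d) (Fin k) ℝ) (α : Fin d → ℝ)
    (E : Set (Fin k → ℝ))
    (hE : E = {R | (∀ x, 0 < R x) ∧ (∑ x, R x = 1) ∧ A.mulVec R = α})
    (Pstar : Fin k → ℝ) (hPmem : Pstar ∈ E)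
    (hPmin : ∀ R ∈ E, KL Pstar Q ≤ KL R Q)
    (P : Fin k → ℝ) (hP : P ∈ E) :
    KL P Q = KL Pstar Q + KL P Pstar := by
  subst hE
  have hQ : ∀ x, Q x ≠ 0 := fun x => (hQpos x).ne'
  rw [KL_eq_KL_add_KL_add_sum P Pstar Q (fun x => (hPmem.1 x).ne') hQ,
    linearFamily.sum_sub_mul_log_div_eq_zero (A := A) (α := α) hQ hPmem hPmin hP, add_zero]

/-- Pythagorean identity for the I-projection onto an affine set:
for any `P ∈ E`, `D(P‖Q) = D(P*‖Q) + D(P‖P*)`. -/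
theorem stmt_2 {k d : ℕ} (hk : 2 ≤ k)
    (Q : Fin k → ℝ) (hQpos : ∀ x, 0 < Q x) (hQsum : ∑ x, Q x = 1)
    (A : Matrix (Fin d) (Fin k) ℝ) (α : Fin d → ℝ)
    (E : Set (Fin k → ℝ))
    (hE : E = {R | (∀ x, 0 < R x) ∧ (∑ x, R x = 1) ∧ A.mulVec R = α})
    (Pstar : Fin k → ℝ) (hPmem : Pstar ∈ E)
    (hPmin : ∀ R ∈ E, KL Pstar Q ≤ KL R Q)
    (P : Fin k → ℝ) (hP : P ∈ E) :
    KL P Q = KL Pstar Q + KL P Pstar :=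
  stmt_2_general Q hQpos A α E hE Pstar hPmem hPmin P hP
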